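/- arXiv:2604.02874 — 5 statements merged into one kernel-verified Lean document; each statement's English description precedes it below -/
import Mathlib

section
/- Let f : ℝ → ℂ be a Schwartz function, let a > 0 and δ ∈ ℝ. Then (1/a) · Σ_{k ∈ ℤ} f(k/a) · e^{-2πi k δ / a} = Σ_{n ∈ ℤ} f̂(a n + δ), where both bilateral series converge absolutely. -/
open MeasureTheory Complex
open scoped Real FourierTransform SchwartzMap

/-! Apply Poisson summation `∑ F (x + n) = ∑ 𝓕 F n · e(n x)` to the Schwartz function
`F y = 𝓕 f (a y)` at `x = δ / a`. The left side is `∑ 𝓕 f (a n + δ)`; by scaling and Fourier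
inversion `𝓕 F ξ = |a|⁻¹ 𝓕 (𝓕 f) (ξ / a) = |a|⁻¹ f (-ξ / a)`, so after `n ↦ -k` the right side is
the modulated sum of the samples `f (k / a)`. Both series converge absolutely because a Schwartz
function composed with an affine bijection of `ℝ` is again Schwartz. -/

theorem Function.hasTemperateGrowth_mul_add (a δ : ℝ) :
    (fun x : ℝ => a * x + δ).HasTemperateGrowth := by
  fun_prop

theorem antilipschitzWith_mul_add {a : ℝ} (ha : a ≠ 0) (δ : ℝ) :
    AntilipschitzWith ‖a‖₊⁻¹ fun x : ℝ => a * x + δ := by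
  refine AntilipschitzWith.of_le_mul_dist fun x y => ?_
  rw [Real.dist_eq, Real.dist_eq, add_sub_add_right_eq_sub, ← mul_sub, abs_mul, NNReal.coe_inv,
    coe_nnnorm, Real.norm_eq_abs, inv_mul_cancel_left₀ (abs_ne_zero.mpr ha)]

namespace SchwartzMap

variable {E : Type*} [NormedAddCommGroup E] [NormedSpace ℝ E]

noncomputable def compMulAdd (f : 𝓢(ℝ, E)) {a : ℝ} (ha : a ≠ 0) (δ : ℝ) : 𝓢(ℝ, E) :=
  compCLMOfAntilipschitz ℝ (Function.hasTemperateGrowth_mul_add a δ)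
    (antilipschitzWith_mul_add ha δ) f

@[simp]
theorem compMulAdd_apply (f : 𝓢(ℝ, E)) {a : ℝ} (ha : a ≠ 0) (δ x : ℝ) :
    f.compMulAdd ha δ x = f (a * x + δ) :=
  rfl

theorem summable_norm_intCast (f : 𝓢(ℝ, E)) : Summable fun n : ℤ => ‖f n‖ :=
  summable_of_isBigO (Real.summable_abs_int_rpow one_lt_two)
    ((f.isBigO_cocompact_rpow (-2)).norm_left.comp_tendsto Int.tendsto_coe_cofinite)

theorem summable_norm_mul_intCast_add (f : 𝓢(ℝ, E)) {a : ℝ} (ha : a ≠ 0) (δ : ℝ) :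
    Summable fun n : ℤ => ‖f (a * n + δ)‖ :=
  (f.compMulAdd ha δ).summable_norm_intCast

end SchwartzMap

theorem Real.fourier_comp_mul_left {E : Type*} [NormedAddCommGroup E] [NormedSpace ℂ E]
    (G : ℝ → E) {a : ℝ} (ha : a ≠ 0) (ξ : ℝ) :
    𝓕 (fun x => G (a * x)) ξ = |a|⁻¹ • 𝓕 G (ξ / a) := by
  simp only [Real.fourier_real_eq]
  rw [← abs_inv, ← Measure.integral_comp_mul_left (fun y => 𝐞 (-(y * (ξ / a))) • G y) a]
  congr 1 with x
  rw [mul_comm a, mul_assoc, mul_div_cancel₀ ξ ha]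

theorem SchwartzMap.fourier_fourier_apply {V E : Type*} [NormedAddCommGroup V]
    [InnerProductSpace ℝ V] [FiniteDimensional ℝ V] [MeasurableSpace V] [BorelSpace V]
    [NormedAddCommGroup E] [NormedSpace ℂ E] [CompleteSpace E] (f : 𝓢(V, E)) (x : V) :
    𝓕 (𝓕 (f : V → E)) x = f (-x) := by
  rw [← neg_neg x, ← Real.fourierInv_eq_fourier_neg, neg_neg, ← fourier_coe, ← fourierInv_coe,
    FourierPair.fourierInv_fourier_eq]

theorem SchwartzMap.tsum_fourier_mul_intCast_add (f : 𝓢(ℝ, ℂ)) {a : ℝ} (ha : a ≠ 0) (δ : ℝ) :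
    ∑' n : ℤ, 𝓕 (f : ℝ → ℂ) (a * n + δ)
      = ((|a| : ℝ) : ℂ)⁻¹ * ∑' k : ℤ, f (k / a) * exp (-(2 * π * I * k * δ) / a) := by
  set F := (𝓕 f).compMulAdd ha 0
  have hF : (F : ℝ → ℂ) = fun x => 𝓕 (f : ℝ → ℂ) (a * x) := by ext; simp [F, fourier_coe]
  calc ∑' n : ℤ, 𝓕 (f : ℝ → ℂ) (a * n + δ) = ∑' n : ℤ, F (δ / a + n) := by
        refine tsum_congr fun n => ?_
        rw [hF]
        dsimp only
        rw [mul_add, mul_div_cancel₀ δ ha, add_comm]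
    _ = ∑' n : ℤ, 𝓕 F n * fourier n (δ / a : UnitAddCircle) := F.tsum_eq_tsum_fourier _
    _ = ∑' n : ℤ, ((|a| : ℝ) : ℂ)⁻¹ * (f (-(n / a)) * exp (2 * π * I * n * (δ / a))) := by
        refine tsum_congr fun n => ?_
        rw [fourier_coe, hF, Real.fourier_comp_mul_left _ ha, fourier_fourier_apply,
          fourier_coe_apply, Complex.real_smul]
        push_cast
        rw [div_one, mul_assoc]
    _ = ((|a| : ℝ) : ℂ)⁻¹ * ∑' k : ℤ, f (k / a) * exp (-(2 * π * I * k * δ) / a) := by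
        rw [tsum_mul_left, ← tsum_comp_neg]
        refine congrArg _ (tsum_congr fun k => ?_)
        rw [Int.cast_neg, neg_div, neg_neg]
        congr 2
        push_cast
        ring

/-- **Poisson summation with scaling and shift for Schwartz functions.**
For a Schwartz function `f : ℝ → ℂ`, `a > 0` and `δ ∈ ℝ`,
`(1/a) ∑_{k ∈ ℤ} f(k/a) e^{-2πikδ/a} = ∑_{n ∈ ℤ} 𝓕f(an + δ)`,
and both bilateral series converge absolutely. -/
theorem stmt0 (f : SchwartzMap ℝ ℂ) (a δ : ℝ) (ha : 0 < a) :
    Summable (fun k : ℤ =>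
      ‖f (k / a) * Complex.exp (-(2 * (π : ℂ) * Complex.I * (k : ℂ) * (δ : ℂ)) / (a : ℂ))‖) ∧
    Summable (fun n : ℤ => ‖𝓕 (fun x : ℝ => f x) (a * n + δ)‖) ∧
    (1 / (a : ℂ)) *
        ∑' k : ℤ, f (k / a) *
          Complex.exp (-(2 * (π : ℂ) * Complex.I * (k : ℂ) * (δ : ℂ)) / (a : ℂ))
      = ∑' n : ℤ, 𝓕 (fun x : ℝ => f x) (a * n + δ) := by
  refine ⟨?_, (𝓕 f).summable_norm_mul_intCast_add ha.ne' δ, ?_⟩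
  · simpa [Complex.norm_exp, div_eq_inv_mul] using
      f.summable_norm_mul_intCast_add (inv_ne_zero ha.ne') 0
  · rw [SchwartzMap.tsum_fourier_mul_intCast_add f ha.ne', abs_of_pos ha, one_div]
end

section
/- Let 0 < R₁ < R₂, let m ≥ 1 be an integer, set w_k = R₁ · exp(2πi k / m), and let λ ∈ ℂ with |λ| < R₁. Let f be holomorphic on an open set containing the closed disk {z : |z| ≤ R₂}. Then (1/m) · Σ_{k=1}^{m} w_k f(w_k) / (w_k - λ) = f(λ) - f(λ) · λ^m / (λ^m - R₁^m) + (1/(2πi)) · ∮_{|z|=R₂} ( R₁^m / (z^m - R₁^m) ) · f(z)/(z - λ) dz, where the last term is the circle integral over the circle of radius R₂ centered at 0. -/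
/-! Writing `w_k = R₁ ζ ^ k` with `ζ = exp (2πi/m)`, the logarithmic derivative of
`z ^ m - R₁ ^ m = ∏ k, (z - w_k)` gives the partial fraction expansion
`R₁ ^ m / (z ^ m - R₁ ^ m) = (1/m) ∑ k, w_k / (z - w_k)`. Inserting it into the contour integral
leaves the integrals of `f z / ((z - w_k) (z - λ))`, which are `2πi (f w_k - f λ) / (w_k - λ)` by
Cauchy's formula, and the same expansion at `z = λ` sums the resulting `f λ` terms. -/

open Complex Finset Metric
open scoped Real

theorem Finset.sum_Icc_one_eq_sum_range_of_eq {M : Type*} [AddCommMonoid M] {g : ℕ → M} {m : ℕ}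
    (h : g m = g 0) : ∑ k ∈ Icc 1 m, g k = ∑ k ∈ range m, g k := by
  have shift : ∑ k ∈ Icc 1 m, g k = ∑ k ∈ range m, g (k + 1) := by
    rw [range_eq_Ico, sum_Ico_add']
    rfl
  rcases m with _ | n
  · rfl
  rw [shift, sum_range_succ, sum_range_succ', h]

theorem pow_ne_pow_of_norm_ne {𝕜 : Type*} [NormedDivisionRing 𝕜] {x y : 𝕜} {m : ℕ}
    (h : ‖x‖ ≠ ‖y‖) (hm : m ≠ 0) : x ^ m ≠ y ^ m := fun hxy =>
  h <| (pow_left_inj₀ (norm_nonneg x) (norm_nonneg y) hm).1 <| by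
    rw [← norm_pow, ← norm_pow, hxy]

namespace IsPrimitiveRoot

theorem mul_pow_pow_eq {M : Type*} [CommMonoid M] {ζ : M} {m : ℕ} (hζ : IsPrimitiveRoot ζ m)
    (a : M) (k : ℕ) : (a * ζ ^ k) ^ m = a ^ m := by
  rw [mul_pow, ← pow_mul, mul_comm k, pow_mul, hζ.pow_eq_one, one_pow, mul_one]

variable {K : Type*} [Field K] {ζ : K} {m : ℕ}

open Polynomial in
theorem sum_one_div_sub_mul_pow (hζ : IsPrimitiveRoot ζ m) {a z : K} (hz : z ^ m ≠ a ^ m) :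
    ∑ k ∈ range m, 1 / (z - a * ζ ^ k) = m * z ^ (m - 1) / (z ^ m - a ^ m) := by
  have hsplits := X_pow_sub_C_splits_of_isPrimitiveRoot hζ (rfl : a ^ m = a ^ m)
  have h := hsplits.eval_derivative_div_eval_of_ne_zero (x := z) (by simpa [sub_eq_zero] using hz)
  rw [← nthRoots, hζ.nthRoots_eq rfl, Multiset.map_map, ← range_val, ← sum_eq_multiset_sum] at h
  simp only [derivative_sub, derivative_X_pow, derivative_C, sub_zero, eval_mul, eval_pow, eval_X,
    eval_sub, eval_C, Function.comp_apply, mul_comm _ a] at h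
  exact h.symm

theorem sum_mul_pow_div_sub_mul_pow (hζ : IsPrimitiveRoot ζ m) {a z : K} (hz : z ^ m ≠ a ^ m) :
    ∑ k ∈ range m, a * ζ ^ k / (z - a * ζ ^ k) = m * a ^ m / (z ^ m - a ^ m) := by
  have hm : m ≠ 0 := by
    rintro rfl
    simp at hz
  have hne : ∀ k, z - a * ζ ^ k ≠ 0 := fun k h => hz <| sub_eq_zero.1 h ▸ hζ.mul_pow_pow_eq a k
  calc ∑ k ∈ range m, a * ζ ^ k / (z - a * ζ ^ k)
      = ∑ k ∈ range m, (z * (1 / (z - a * ζ ^ k)) - 1) :=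
        sum_congr rfl fun k _ => by field_simp [hne k]; ring
    _ = m * a ^ m / (z ^ m - a ^ m) := by
        rw [sum_sub_distrib, ← mul_sum, hζ.sum_one_div_sub_mul_pow hz, ← mul_div_assoc,
          mul_left_comm, mul_pow_sub_one hm, sum_const, card_range, nsmul_one]
        field_simp
        ring

end IsPrimitiveRoot

theorem ContinuousOn.div_sub_of_notMem {f : ℂ → ℂ} {s : Set ℂ} (hf : ContinuousOn f s) {a : ℂ}
    (ha : a ∉ s) : ContinuousOn (fun z => f z / (z - a)) s :=
  hf.div (by fun_prop) fun z hz h => ha (sub_eq_zero.1 h ▸ hz)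

theorem circleIntegral_finset_sum {ι : Type*} (s : Finset ι) {F : ι → ℂ → ℂ} {c : ℂ} {R : ℝ}
    (hF : ∀ i ∈ s, CircleIntegrable (F i) c R) :
    ∮ z in C(c, R), ∑ i ∈ s, F i z = ∑ i ∈ s, ∮ z in C(c, R), F i z := by
  simp only [circleIntegral, smul_sum]
  exact intervalIntegral.integral_finsetSum fun i hi => (hF i hi).out

theorem circleIntegral_div_sub_div_sub {f : ℂ → ℂ} {c a b : ℂ} {R : ℝ}
    (hf : DifferentiableOn ℂ f (closedBall c R)) (ha : a ∈ ball c R) (hb : b ∈ ball c R)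
    (hab : a ≠ b) :
    ∮ z in C(c, R), f z / (z - a) / (z - b) = 2 * π * I * ((f a - f b) / (a - b)) := by
  have hR : 0 ≤ R := dist_nonneg.trans (mem_ball.1 ha).le
  have cauchy : ∀ w ∈ ball c R, ∮ z in C(c, R), f z / (z - w) = 2 * π * I * f w := fun w hw => by
    simpa only [smul_eq_mul, div_eq_inv_mul] using hf.circleIntegral_sub_inv_smul hw
  have integrable : ∀ w ∈ ball c R, CircleIntegrable (fun z => f z / (z - w)) c R := fun w hw =>
    ((hf.continuousOn.mono sphere_subset_closedBall).div_sub_of_notMem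
      (sphere_disjoint_ball.notMem_of_mem_right hw)).circleIntegrable hR
  calc ∮ z in C(c, R), f z / (z - a) / (z - b)
      = ∮ z in C(c, R), (a - b)⁻¹ * (f z / (z - a) - f z / (z - b)) := by
        refine circleIntegral.integral_congr hR fun z hz => ?_
        have hza := sub_ne_zero.2 (sphere_disjoint_ball.ne_of_mem hz ha)
        have hzb := sub_ne_zero.2 (sphere_disjoint_ball.ne_of_mem hz hb)
        field_simp [sub_ne_zero.2 hab]
        ring
    _ = 2 * π * I * ((f a - f b) / (a - b)) := by
        rw [circleIntegral.integral_const_mul, circleIntegral.integral_sub (integrable a ha)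
          (integrable b hb), cauchy a ha, cauchy b hb]
        ring

theorem circleIntegral_pow_div_pow_sub_pow_mul_div_sub {ζ a lam : ℂ} {m : ℕ} {R : ℝ}
    {f : ℂ → ℂ} (hζ : IsPrimitiveRoot ζ m) (hf : DifferentiableOn ℂ f (closedBall 0 R))
    (ha : ‖a‖ < R) (hlam : lam ∈ ball 0 R) (hlam_pow : lam ^ m ≠ a ^ m) :
    ∮ z in C(0, R), a ^ m / (z ^ m - a ^ m) * f z / (z - lam)
      = 2 * π * I / m *
          ∑ k ∈ range m, a * ζ ^ k * ((f (a * ζ ^ k) - f lam) / (a * ζ ^ k - lam)) := by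
  have hm : m ≠ 0 := by
    rintro rfl
    simp at hlam_pow
  have hR : 0 ≤ R := (norm_nonneg a).trans ha.le
  have hw_ball : ∀ k, a * ζ ^ k ∈ ball 0 R := fun k => by
    simpa [hζ.norm'_eq_one hm] using ha
  have hw_ne : ∀ k, a * ζ ^ k ≠ lam := fun k h => hlam_pow (h ▸ hζ.mul_pow_pow_eq a k)
  have hpartial : Set.EqOn (fun z => a ^ m / (z ^ m - a ^ m) * f z / (z - lam))
      (fun z => (m : ℂ)⁻¹ * ∑ k ∈ range m, a * ζ ^ k * (f z / (z - a * ζ ^ k) / (z - lam)))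
      (sphere 0 R) := fun z hz => by
    have hz_pow : z ^ m ≠ a ^ m :=
      pow_ne_pow_of_norm_ne (by rw [mem_sphere_zero_iff_norm.1 hz]; exact ha.ne') hm
    calc _ = (m : ℂ)⁻¹ * (m * a ^ m / (z ^ m - a ^ m)) * (f z / (z - lam)) := by
            field_simp
      _ = _ := by
            rw [← hζ.sum_mul_pow_div_sub_mul_pow hz_pow, mul_assoc, sum_mul]
            exact congrArg _ (sum_congr rfl fun k _ => by ring)
  have hfc : ContinuousOn f (sphere 0 R) := hf.continuousOn.mono sphere_subset_closedBall
  have hintegrable : ∀ k ∈ range m,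
      CircleIntegrable (fun z => a * ζ ^ k * (f z / (z - a * ζ ^ k) / (z - lam))) 0 R :=
    fun k _ => by
      have hw := sphere_disjoint_ball.notMem_of_mem_right (hw_ball k)
      have hl := sphere_disjoint_ball.notMem_of_mem_right hlam
      exact (continuousOn_const.mul <|
        (hfc.div_sub_of_notMem hw).div_sub_of_notMem hl).circleIntegrable hR
  rw [circleIntegral.integral_congr hR hpartial, circleIntegral.integral_const_mul,
    circleIntegral_finset_sum _ hintegrable, mul_sum, mul_sum]
  refine sum_congr rfl fun k _ => ?_
  rw [circleIntegral.integral_const_mul,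
    circleIntegral_div_sub_div_sub hf (hw_ball k) hlam (hw_ne k)]
  ring

theorem stmt3_general (R₁ R₂ : ℝ) (h1 : 0 < R₁) (h12 : R₁ < R₂) (m : ℕ) (hm : 1 ≤ m)
    (f : ℂ → ℂ) (U : Set ℂ) (hUb : Metric.closedBall 0 R₂ ⊆ U)
    (hf : DifferentiableOn ℂ f U) (lam : ℂ) (hlam : ‖lam‖ < R₁) :
    (1 / (m : ℂ)) * ∑ k ∈ Finset.Icc 1 m,
        ((R₁ : ℂ) * Complex.exp (2 * (π : ℂ) * Complex.I * (k : ℂ) / (m : ℂ))) *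
          f ((R₁ : ℂ) * Complex.exp (2 * (π : ℂ) * Complex.I * (k : ℂ) / (m : ℂ))) /
          (((R₁ : ℂ) * Complex.exp (2 * (π : ℂ) * Complex.I * (k : ℂ) / (m : ℂ))) - lam)
      = f lam - f lam * lam ^ m / (lam ^ m - (R₁ : ℂ) ^ m)
        + (1 / (2 * (π : ℂ) * Complex.I)) *
            ∮ z in C(0, R₂), ((R₁ : ℂ) ^ m / (z ^ m - (R₁ : ℂ) ^ m)) * f z / (z - lam) := by
  
  have hm0 : m ≠ 0 := by omega
  set ζ := exp (2 * π * I / m)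
  have hζ : IsPrimitiveRoot ζ m := isPrimitiveRoot_exp m hm0
  have hexp : ∀ k : ℕ, exp (2 * π * I * k / m) = ζ ^ k := fun k => by
    rw [← exp_nat_mul]
    ring_nf
  have hR₁ : ‖(R₁ : ℂ)‖ = R₁ := by simp [h1.le]
  have hlam_pow : lam ^ m ≠ (R₁ : ℂ) ^ m :=
    pow_ne_pow_of_norm_ne (by rw [hR₁]; exact hlam.ne) hm0
  have hsum_lam : ∑ k ∈ range m, R₁ * ζ ^ k / (R₁ * ζ ^ k - lam)
      = -(m * (R₁ : ℂ) ^ m / (lam ^ m - (R₁ : ℂ) ^ m)) := by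
    rw [← hζ.sum_mul_pow_div_sub_mul_pow hlam_pow, ← sum_neg_distrib]
    exact sum_congr rfl fun k _ => by rw [← div_neg, neg_sub]
  simp only [hexp]
  rw [sum_Icc_one_eq_sum_range_of_eq (by rw [pow_zero, hζ.pow_eq_one]),
    circleIntegral_pow_div_pow_sub_pow_mul_div_sub hζ (hf.mono hUb) (by rwa [hR₁])
      (mem_ball_zero_iff.2 (hlam.trans h12)) hlam_pow]
  have hsplit : ∑ k ∈ range m, R₁ * ζ ^ k * ((f (R₁ * ζ ^ k) - f lam) / (R₁ * ζ ^ k - lam))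
      = ∑ k ∈ range m, R₁ * ζ ^ k * f (R₁ * ζ ^ k) / (R₁ * ζ ^ k - lam)
        - f lam * ∑ k ∈ range m, R₁ * ζ ^ k / (R₁ * ζ ^ k - lam) := by
    rw [mul_sum, ← sum_sub_distrib]
    exact sum_congr rfl fun k _ => by ring
  rw [hsplit, hsum_lam]
  field_simp [two_pi_I_ne_zero, sub_ne_zero.2 hlam_pow, Nat.cast_ne_zero.2 hm0]
  ring

/-- **Scalar discrete contour (finite Poisson summation) identity.**
For `0 < R₁ < R₂`, `m ≥ 1`, `w_k = R₁ e^{2πik/m}`, `|lam| < R₁`, and `f` holomorphic on an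
open set containing the closed disk of radius `R₂`:
`(1/m) ∑_{k=1}^m w_k f(w_k)/(w_k - lam)
  = f(lam) - f(lam)·lam^m/(lam^m - R₁^m)
    + (1/(2πi)) ∮_{|z|=R₂} (R₁^m/(z^m - R₁^m)) f(z)/(z - lam) dz`. -/
theorem stmt3 (R₁ R₂ : ℝ) (h1 : 0 < R₁) (h12 : R₁ < R₂) (m : ℕ) (hm : 1 ≤ m)
    (f : ℂ → ℂ) (U : Set ℂ) (hU : IsOpen U) (hUb : Metric.closedBall 0 R₂ ⊆ U)
    (hf : DifferentiableOn ℂ f U) (lam : ℂ) (hlam : ‖lam‖ < R₁) :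
    (1 / (m : ℂ)) * ∑ k ∈ Finset.Icc 1 m,
        ((R₁ : ℂ) * Complex.exp (2 * (π : ℂ) * Complex.I * (k : ℂ) / (m : ℂ))) *
          f ((R₁ : ℂ) * Complex.exp (2 * (π : ℂ) * Complex.I * (k : ℂ) / (m : ℂ))) /
          (((R₁ : ℂ) * Complex.exp (2 * (π : ℂ) * Complex.I * (k : ℂ) / (m : ℂ))) - lam)
      = f lam - f lam * lam ^ m / (lam ^ m - (R₁ : ℂ) ^ m)
        + (1 / (2 * (π : ℂ) * Complex.I)) *
            ∮ z in C(0, R₂), ((R₁ : ℂ) ^ m / (z ^ m - (R₁ : ℂ) ^ m)) * f z / (z - lam) :=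
  stmt3_general R₁ R₂ h1 h12 m hm f U hUb hf lam hlam
end

section
/- Let 0 < R₁ < R₂, let m ≥ 1 be an integer, and set μ = R₁/R₂ (so 0 < μ < 1). Let A be an n×n complex matrix that is diagonalizable as A = S D S^{-1} with all eigenvalues of modulus at most R₁, and let κ_S = ‖S‖‖S^{-1}‖. Let f be continuous on the circle |z| = R₂ with |f(z)| ≤ B₂ there. Then ‖ (1/(2πi)) · ∮_{|z|=R₂} ( R₁^m / (z^m - R₁^m) ) · f(z) · (z I - A)^{-1} dz ‖ ≤ R₂ · B₂ · κ_S · μ^m / ( (1 - μ^m)(R₂ - R₁) ). -/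
/-! Standard ML estimate. On `|z| = R₂` the reverse triangle inequality bounds the scalar kernel
by `R₁^m / (R₂^m - R₁^m) = μ^m / (1 - μ^m)`, and the resolvent `(zI - A)⁻¹ = S diag((z - dᵢ)⁻¹) S⁻¹`
by `κ_S / (R₂ - R₁)`, since each `|z - dᵢ| ≥ R₂ - R₁`. The circle has length `2πR₂`. -/

open Complex Matrix
open scoped Real Matrix.Norms.L2Operator

namespace Matrix

section Field

variable {ι K : Type*} [Fintype ι] [DecidableEq ι] [Field K]

theorem inv_conj {S : Matrix ι ι K} (hS : IsUnit S) (M : Matrix ι ι K) :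
    (S * M * S⁻¹)⁻¹ = S * M⁻¹ * S⁻¹ := by
  have hdet : IsUnit S.det := (isUnit_iff_isUnit_det S).mp hS
  rw [mul_inv_rev, mul_inv_rev, nonsing_inv_nonsing_inv S hdet, mul_assoc]

theorem smul_one_sub_conj_diagonal {S : Matrix ι ι K} (hS : IsUnit S) (d : ι → K) (z : K) :
    z • (1 : Matrix ι ι K) - S * diagonal d * S⁻¹ = S * diagonal (fun i => z - d i) * S⁻¹ := by
  have hdet : IsUnit S.det := (isUnit_iff_isUnit_det S).mp hS
  have hscalar : S * diagonal (fun _ => z) * S⁻¹ = z • (1 : Matrix ι ι K) := by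
    rw [← smul_one_eq_diagonal, Matrix.mul_smul, Matrix.mul_one, Matrix.smul_mul,
      mul_nonsing_inv S hdet]
  rw [← hscalar, ← sub_mul, ← mul_sub, diagonal_sub]

theorem inv_diagonal_of_ne_zero {v : ι → K} (hv : ∀ i, v i ≠ 0) :
    (diagonal v)⁻¹ = diagonal fun i => (v i)⁻¹ := by
  refine inv_eq_right_inv ?_
  rw [diagonal_mul_diagonal, ← diagonal_one]
  exact congrArg diagonal (funext fun i => mul_inv_cancel₀ (hv i))

theorem inv_smul_one_sub_conj_diagonal {S : Matrix ι ι K} (hS : IsUnit S) {d : ι → K} {z : K}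
    (hz : ∀ i, z ≠ d i) :
    (z • (1 : Matrix ι ι K) - S * diagonal d * S⁻¹)⁻¹
      = S * diagonal (fun i => (z - d i)⁻¹) * S⁻¹ := by
  rw [smul_one_sub_conj_diagonal hS, inv_conj hS,
    inv_diagonal_of_ne_zero fun i => sub_ne_zero.mpr (hz i)]

end Field

section RCLike

variable {ι 𝕜 : Type*} [Fintype ι] [DecidableEq ι] [RCLike 𝕜]

theorem l2_opNorm_diagonal_le {v : ι → 𝕜} {C : ℝ} (hC : 0 ≤ C) (hv : ∀ i, ‖v i‖ ≤ C) :
    ‖diagonal v‖ ≤ C := by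
  rw [l2_opNorm_diagonal]
  exact (pi_norm_le_iff_of_nonneg hC).mpr hv

theorem l2_opNorm_resolvent_conj_diagonal_le {S : Matrix ι ι 𝕜} (hS : IsUnit S)
    {d : ι → 𝕜} {z : 𝕜} {r : ℝ} (hr : 0 < r) (hdist : ∀ i, r ≤ ‖z - d i‖) :
    ‖(z • (1 : Matrix ι ι 𝕜) - S * diagonal d * S⁻¹)⁻¹‖ ≤ ‖S‖ * ‖S⁻¹‖ / r := by
  have hdiag : ‖diagonal (fun i => (z - d i)⁻¹)‖ ≤ r⁻¹ :=
    l2_opNorm_diagonal_le (inv_nonneg.mpr hr.le) fun i => by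
      rw [norm_inv]
      exact inv_anti₀ hr (hdist i)
  have hz : ∀ i, z ≠ d i := fun i => sub_ne_zero.mp (norm_pos_iff.mp (hr.trans_le (hdist i)))
  rw [inv_smul_one_sub_conj_diagonal hS hz]
  calc ‖S * diagonal (fun i => (z - d i)⁻¹) * S⁻¹‖
      ≤ ‖S‖ * ‖diagonal (fun i => (z - d i)⁻¹)‖ * ‖S⁻¹‖ :=
        (l2_opNorm_mul _ _).trans (by gcongr; exact l2_opNorm_mul _ _)
    _ ≤ ‖S‖ * r⁻¹ * ‖S⁻¹‖ := by gcongr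
    _ = ‖S‖ * ‖S⁻¹‖ / r := by ring

end RCLike

end Matrix

theorem norm_div_sub_le {E : Type*} [NormedField E] {c w : E} (h : ‖c‖ < ‖w‖) :
    ‖c / (w - c)‖ ≤ ‖c‖ / (‖w‖ - ‖c‖) := by
  rw [norm_div]
  exact div_le_div_of_nonneg_left (norm_nonneg c) (sub_pos.mpr h) (norm_sub_norm_le w c)

theorem Complex.norm_ofReal_pow_div_pow_sub_ofReal_pow_le {r R : ℝ} (hr : 0 ≤ r) (hrR : r < R)
    {m : ℕ} (hm : m ≠ 0) {z : ℂ} (hz : ‖z‖ = R) :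
    ‖(r : ℂ) ^ m / (z ^ m - (r : ℂ) ^ m)‖ ≤ r ^ m / (R ^ m - r ^ m) := by
  have hrm : ‖(r : ℂ) ^ m‖ = r ^ m := by simp [abs_of_nonneg hr]
  have hzm : ‖z ^ m‖ = R ^ m := by rw [norm_pow, hz]
  rw [← hrm, ← hzm]
  exact norm_div_sub_le (by rw [hrm, hzm]; exact pow_lt_pow_left₀ hrR hr hm)

theorem div_pow_div_one_sub_div_pow {a b : ℝ} (hb : 0 < b) (m : ℕ) :
    (a / b) ^ m / (1 - (a / b) ^ m) = a ^ m / (b ^ m - a ^ m) := by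
  have hbm : b ^ m ≠ 0 := pow_ne_zero m hb.ne'
  rw [div_pow, one_sub_div hbm, div_div_div_cancel_right₀ hbm]

theorem stmt7_general {n : ℕ} (R₁ R₂ : ℝ) (h1 : 0 < R₁) (h12 : R₁ < R₂) (m : ℕ) (hm : 1 ≤ m)
    (A S : Matrix (Fin n) (Fin n) ℂ) (d : Fin n → ℂ) (hS : IsUnit S)
    (hA : A = S * Matrix.diagonal d * S⁻¹) (hd : ∀ i, ‖d i‖ ≤ R₁)
    (f : ℂ → ℂ) (B₂ : ℝ)
    (hB : ∀ z ∈ Metric.sphere (0 : ℂ) R₂, ‖f z‖ ≤ B₂) :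
    ‖(1 / (2 * (π : ℂ) * Complex.I)) •
        ∮ z in C(0, R₂),
          (((R₁ : ℂ) ^ m / (z ^ m - (R₁ : ℂ) ^ m)) * f z) •
            ((z • (1 : Matrix (Fin n) (Fin n) ℂ) - A)⁻¹)‖
      ≤ R₂ * B₂ * (‖S‖ * ‖S⁻¹‖) * (R₁ / R₂) ^ m / ((1 - (R₁ / R₂) ^ m) * (R₂ - R₁)) := by
  have hR₂ : 0 < R₂ := h1.trans h12
  have hpow : R₁ ^ m < R₂ ^ m := pow_lt_pow_left₀ h12 h1.le (by omega)
  have hB₀ : 0 ≤ B₂ := (norm_nonneg _).trans (hB R₂ (by simp [abs_of_pos hR₂]))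
  have hbound : ∀ z ∈ Metric.sphere (0 : ℂ) R₂,
      ‖(((R₁ : ℂ) ^ m / (z ^ m - (R₁ : ℂ) ^ m)) * f z) •
          ((z • (1 : Matrix (Fin n) (Fin n) ℂ) - A)⁻¹)‖
        ≤ R₁ ^ m / (R₂ ^ m - R₁ ^ m) * B₂ * (‖S‖ * ‖S⁻¹‖ / (R₂ - R₁)) := by
    intro z hz
    have hz' : ‖z‖ = R₂ := mem_sphere_zero_iff_norm.mp hz
    have hscalar := norm_ofReal_pow_div_pow_sub_ofReal_pow_le h1.le h12 (m := m) (by omega) hz'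
    have hres := l2_opNorm_resolvent_conj_diagonal_le hS (d := d) (sub_pos.mpr h12)
      fun i => by linarith [norm_sub_norm_le z (d i), hd i]
    rw [norm_smul, norm_mul, hA]
    gcongr
    exact hB z hz
  calc _ ≤ R₂ * (R₁ ^ m / (R₂ ^ m - R₁ ^ m) * B₂ * (‖S‖ * ‖S⁻¹‖ / (R₂ - R₁))) := by
        rw [one_div]
        exact circleIntegral.norm_two_pi_i_inv_smul_integral_le_of_norm_le_const hR₂.le hbound
    _ = _ := by
        rw [← div_div, mul_div_assoc (R₂ * B₂ * _), div_pow_div_one_sub_div_pow hR₂]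
        ring

/-- **Bound on the analytic truncation integral (ML inequality).**
For `0 < R₁ < R₂`, `μ = R₁/R₂`, `A = S D S⁻¹` diagonalizable with eigenvalues of modulus
at most `R₁`, `κ_S = ‖S‖‖S⁻¹‖`, and `f` continuous on `|z| = R₂` with `|f| ≤ B₂` there:
`‖(1/(2πi)) ∮_{|z|=R₂} (R₁^m/(z^m - R₁^m)) f(z) (zI-A)⁻¹ dz‖
  ≤ R₂ B₂ κ_S μ^m / ((1 - μ^m)(R₂ - R₁))`. -/
theorem stmt7 {n : ℕ} (R₁ R₂ : ℝ) (h1 : 0 < R₁) (h12 : R₁ < R₂) (m : ℕ) (hm : 1 ≤ m)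
    (A S : Matrix (Fin n) (Fin n) ℂ) (d : Fin n → ℂ) (hS : IsUnit S)
    (hA : A = S * Matrix.diagonal d * S⁻¹) (hd : ∀ i, ‖d i‖ ≤ R₁)
    (f : ℂ → ℂ) (hf : ContinuousOn f (Metric.sphere 0 R₂)) (B₂ : ℝ)
    (hB : ∀ z ∈ Metric.sphere (0 : ℂ) R₂, ‖f z‖ ≤ B₂) :
    ‖(1 / (2 * (π : ℂ) * Complex.I)) •
        ∮ z in C(0, R₂),
          (((R₁ : ℂ) ^ m / (z ^ m - (R₁ : ℂ) ^ m)) * f z) •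
            ((z • (1 : Matrix (Fin n) (Fin n) ℂ) - A)⁻¹)‖
      ≤ R₂ * B₂ * (‖S‖ * ‖S⁻¹‖) * (R₁ / R₂) ^ m / ((1 - (R₁ / R₂) ^ m) * (R₂ - R₁)) :=
  stmt7_general R₁ R₂ h1 h12 m hm A S d hS hA hd f B₂ hB
end

section
/- Let T > 0, D > 0, and α ≥ 1/2 be real numbers. Then the series Σ_{n=1}^{∞} e^{-T (n D)^{2α}} converges and satisfies Σ_{n=1}^{∞} e^{-T (n D)^{2α}} ≤ e^{-T D^{2α}} · ( 1 + 1 / (2α T D^{2α}) ). -/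
/-! By Bernoulli's inequality `(k + 1) ^ b ≥ 1 + b k` for `b ≥ 1`, the `k`-th term of
`∑ₖ e^{-c (k+1)^b}` is at most `e^{-c} (e^{-bc})^k`, so the series is dominated by a geometric
series with sum `e^{-c} / (1 - e^{-bc})`; and `1 / (1 - e^{-x}) ≤ 1 + 1/x` because `e^x ≥ 1 + x`. -/

open Real

lemma inv_one_sub_exp_neg_le {x : ℝ} (hx : 0 < x) : (1 - exp (-x))⁻¹ ≤ 1 + 1 / x := by
  have hexp : exp (-x) * (x + 1) ≤ 1 := by
    rw [exp_neg, inv_mul_le_iff₀ (exp_pos x), mul_one]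
    linarith [add_one_le_exp x]
  have hpos : 0 < 1 - exp (-x) := by
    rw [sub_pos, exp_lt_one_iff]
    linarith
  rw [inv_le_iff_one_le_mul₀' hpos, one_add_div hx.ne', mul_div_assoc', le_div_iff₀ hx]
  nlinarith

lemma exp_neg_mul_succ_rpow_le {b c : ℝ} (hb : 1 ≤ b) (hc : 0 ≤ c) (k : ℕ) :
    exp (-(c * ((k : ℝ) + 1) ^ b)) ≤ exp (-c) * exp (-(b * c)) ^ k := by
  rw [← exp_nat_mul, ← exp_add, exp_le_exp]
  have hbernoulli : 1 + b * k ≤ ((k : ℝ) + 1) ^ b := by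
    rw [add_comm (k : ℝ)]
    exact one_add_mul_self_le_rpow_one_add (by linarith [k.cast_nonneg (α := ℝ)]) hb
  nlinarith [mul_le_mul_of_nonneg_left hbernoulli hc]

section

variable {b c : ℝ} (hb : 1 ≤ b) (hc : 0 < c)
include hb hc

lemma exp_neg_mul_lt_one : exp (-(b * c)) < 1 :=
  exp_lt_one_iff.mpr (by nlinarith)

lemma summable_exp_neg_mul_succ_rpow :
    Summable fun k : ℕ => exp (-(c * ((k : ℝ) + 1) ^ b)) :=
  .of_nonneg_of_le (fun _ => (exp_pos _).le) (exp_neg_mul_succ_rpow_le hb hc.le)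
    ((summable_geometric_of_lt_one (exp_pos _).le (exp_neg_mul_lt_one hb hc)).mul_left _)

lemma tsum_exp_neg_mul_succ_rpow_le :
    ∑' k : ℕ, exp (-(c * ((k : ℝ) + 1) ^ b)) ≤ exp (-c) * (1 + 1 / (b * c)) := by
  have hr := exp_neg_mul_lt_one hb hc
  calc ∑' k : ℕ, exp (-(c * ((k : ℝ) + 1) ^ b))
      ≤ ∑' k : ℕ, exp (-c) * exp (-(b * c)) ^ k :=
        (summable_exp_neg_mul_succ_rpow hb hc).tsum_le_tsum (exp_neg_mul_succ_rpow_le hb hc.le)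
          ((summable_geometric_of_lt_one (exp_pos _).le hr).mul_left _)
    _ = exp (-c) * (1 - exp (-(b * c)))⁻¹ := by
        rw [tsum_mul_left, tsum_geometric_of_lt_one (exp_pos _).le hr]
    _ ≤ exp (-c) * (1 + 1 / (b * c)) :=
        mul_le_mul_of_nonneg_left (inv_one_sub_exp_neg_le (by nlinarith)) (exp_pos _).le

end

/-- **Aliasing-error series bound.**
For `T > 0`, `D > 0`, `α ≥ 1/2`, the series `∑_{n=1}^∞ e^{-T(nD)^{2α}}` converges and
`∑_{n=1}^∞ e^{-T(nD)^{2α}} ≤ e^{-TD^{2α}} (1 + 1/(2αTD^{2α}))`. -/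
theorem stmt11 (T D α : ℝ) (hT : 0 < T) (hD : 0 < D) (hα : 1 / 2 ≤ α) :
    Summable (fun k : ℕ => Real.exp (-(T * (((k : ℝ) + 1) * D) ^ (2 * α)))) ∧
    ∑' k : ℕ, Real.exp (-(T * (((k : ℝ) + 1) * D) ^ (2 * α)))
      ≤ Real.exp (-(T * D ^ (2 * α))) * (1 + 1 / (2 * α * T * D ^ (2 * α))) := by
  have hb : 1 ≤ 2 * α := by linarith
  have hc : 0 < T * D ^ (2 * α) := mul_pos hT (rpow_pos_of_pos hD _)
  have hterm (k : ℕ) : T * (((k : ℝ) + 1) * D) ^ (2 * α)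
      = T * D ^ (2 * α) * ((k : ℝ) + 1) ^ (2 * α) := by
    rw [mul_rpow (by positivity) hD.le]
    ring
  simp only [hterm, mul_assoc (2 * α)]
  exact ⟨summable_exp_neg_mul_succ_rpow hb hc, tsum_exp_neg_mul_succ_rpow_le hb hc⟩
end

section
/- There exists an absolute constant C > 0 such that for every real τ ≥ 1 and every ε ∈ (0, 1/2), there exists a real polynomial p of degree at most C · (τ + log(1/ε)) satisfying |p(x)| ≤ 1 for all x ∈ [-1, 1] and |p(x) - cos(τ x)| ≤ ε for all x ∈ [-1, 1]. -/
/-!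
Truncating the Taylor series of `cos` after `n` terms leaves a tail whose `k`-th term is at most
`y ^ (2k) / (2k)! ≤ exp (2y) / 4 ^ k` (compare with one term of the series of `exp (2y)`), so the
error is `O(exp (2τ) / 4 ^ n)` on `[-τ, τ]`, and `n ≈ 2τ + log (1/ε)` terms suffice. Dividing the
truncation by `1 + ε/2` brings it under `1` in absolute value at the cost of doubling the error.
-/

open Real Polynomial Finset Nat

lemma pow_div_factorial_le_exp_mul_div_pow {y a : ℝ} (hy : 0 ≤ y) (ha : 0 < a) (n : ℕ) :
    y ^ n / n ! ≤ exp (a * y) / a ^ n := by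
  calc y ^ n / n ! = (a * y) ^ n / n ! / a ^ n := by rw [mul_pow]; field_simp
    _ ≤ exp (a * y) / a ^ n := by gcongr; exact Real.pow_div_factorial_le_exp _ (by positivity) n

lemma abs_cos_series_term_le (x : ℝ) (k : ℕ) :
    |(-1) ^ k * x ^ (2 * k) / (2 * k)!| ≤ exp (2 * |x|) / 4 ^ k := by
  calc |(-1) ^ k * x ^ (2 * k) / (2 * k)!| = |x| ^ (2 * k) / (2 * k)! := by
        simp [abs_div, abs_mul, abs_pow]
    _ ≤ exp (2 * |x|) / 2 ^ (2 * k) :=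
        pow_div_factorial_le_exp_mul_div_pow (abs_nonneg x) two_pos _
    _ = exp (2 * |x|) / 4 ^ k := by rw [pow_mul]; norm_num

lemma abs_cos_sub_sum_range_le (x : ℝ) (n : ℕ) :
    |cos x - ∑ k ∈ range n, (-1) ^ k * x ^ (2 * k) / (2 * k)!| ≤ 4 / 3 * exp (2 * |x|) / 4 ^ n := by
  have hcos := hasSum_cos x
  rw [← hcos.tsum_eq, ← hcos.summable.sum_add_tsum_nat_add n, add_sub_cancel_left,
    ← Real.norm_eq_abs]
  have hgeom : HasSum (fun i : ℕ ↦ exp (2 * |x|) / 4 ^ n * (1 / 4) ^ i)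
      (exp (2 * |x|) / 4 ^ n * (1 - 1 / 4)⁻¹) :=
    (hasSum_geometric_of_lt_one (by norm_num) (by norm_num)).mul_left _
  calc ‖∑' i, (-1) ^ (i + n) * x ^ (2 * (i + n)) / (2 * (i + n))!‖
      ≤ exp (2 * |x|) / 4 ^ n * (1 - 1 / 4)⁻¹ := tsum_of_norm_bounded hgeom fun i ↦ ?_
    _ = 4 / 3 * exp (2 * |x|) / 4 ^ n := by ring
  calc ‖(-1) ^ (i + n) * x ^ (2 * (i + n)) / (2 * (i + n))!‖
        ≤ exp (2 * |x|) / 4 ^ (i + n) := abs_cos_series_term_le x (i + n)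
    _ = exp (2 * |x|) / 4 ^ n * (1 / 4) ^ i := by rw [pow_add, one_div_pow]; field_simp

lemma four_thirds_mul_exp_div_four_pow_le {τ ε : ℝ} {n : ℕ} (hε : 0 < ε)
    (hn : 2 * τ + log (1 / ε) + 1 ≤ n) : 4 / 3 * exp (2 * τ) / 4 ^ n ≤ ε / 2 := by
  have hexp_n : exp n ≤ 4 ^ n := by
    rw [← exp_one_pow]; gcongr; linarith [exp_one_lt_d9]
  have hexp_le : exp (2 * τ) * exp 1 / ε ≤ 4 ^ n := by
    calc exp (2 * τ) * exp 1 / ε = exp (2 * τ + log (1 / ε) + 1) := by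
          rw [exp_add, exp_add, exp_log (by positivity)]; field_simp
      _ ≤ 4 ^ n := (exp_le_exp.2 hn).trans hexp_n
  rw [div_le_iff₀ (by positivity)]
  rw [div_le_iff₀ hε] at hexp_le
  nlinarith [exp_one_gt_d9, exp_pos (2 * τ)]

lemma abs_div_one_add_le_one {a b δ : ℝ} (hb : |b| ≤ 1) (hab : |a - b| ≤ δ) :
    |a / (1 + δ)| ≤ 1 := by
  have hδ : 0 ≤ δ := (abs_nonneg _).trans hab
  rw [abs_div, abs_of_pos (show 0 < 1 + δ by linarith), div_le_one (by linarith)]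
  linarith [abs_sub_abs_le_abs_sub a b]

lemma abs_div_one_add_sub_le {a b δ : ℝ} (hb : |b| ≤ 1) (hab : |a - b| ≤ δ) :
    |a / (1 + δ) - b| ≤ 2 * δ := by
  have hδ : 0 ≤ δ := (abs_nonneg _).trans hab
  have hsplit : a / (1 + δ) - b = ((a - b) - δ * b) / (1 + δ) := by field_simp; ring
  rw [hsplit, abs_div, abs_of_pos (show 0 < 1 + δ by linarith), div_le_iff₀ (by linarith)]
  calc |a - b - δ * b| ≤ |a - b| + δ * |b| := by
        simpa [abs_mul, abs_of_nonneg hδ] using abs_sub (a - b) (δ * b)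
    _ ≤ 2 * δ * (1 + δ) := by nlinarith

/-- The Taylor polynomial of `cos` with `n` nonzero terms, of degree `2n - 2`. -/
noncomputable def cosTaylor (n : ℕ) : ℝ[X] :=
  ∑ k ∈ range n, C ((-1 : ℝ) ^ k / (2 * k)!) * X ^ (2 * k)

lemma eval_cosTaylor (n : ℕ) (x : ℝ) :
    (cosTaylor n).eval x = ∑ k ∈ range n, (-1) ^ k * x ^ (2 * k) / (2 * k)! := by
  simp only [cosTaylor, eval_finsetSum, eval_mul, eval_C, eval_pow, eval_X]
  exact sum_congr rfl fun k _ ↦ by ring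

lemma natDegree_cosTaylor_le (n : ℕ) : (cosTaylor n).natDegree ≤ 2 * n :=
  natDegree_sum_le_of_forall_le _ _ fun k hk ↦
    (natDegree_C_mul_X_pow_le _ _).trans (by have := mem_range.1 hk; omega)

lemma natDegree_cosTaylor_comp_le (τ : ℝ) (n : ℕ) :
    ((cosTaylor n).comp (C τ * X)).natDegree ≤ 2 * n :=
  calc _ ≤ (cosTaylor n).natDegree * (C τ * X).natDegree := natDegree_comp_le
    _ ≤ 2 * n * 1 :=
        Nat.mul_le_mul (natDegree_cosTaylor_le n) ((natDegree_C_mul_le τ X).trans natDegree_X_le)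
    _ = 2 * n := mul_one _

lemma abs_eval_cosTaylor_comp_sub_cos_le {τ x : ℝ} (hτ : 0 ≤ τ) (hx : |x| ≤ 1) (n : ℕ) :
    |((cosTaylor n).comp (C τ * X)).eval x - cos (τ * x)| ≤ 4 / 3 * exp (2 * τ) / 4 ^ n := by
  have hτx : |τ * x| ≤ τ := by
    rw [abs_mul, abs_of_nonneg hτ]
    exact mul_le_of_le_one_right hτ hx
  rw [eval_comp, eval_mul, eval_C, eval_X, eval_cosTaylor, abs_sub_comm]
  calc _ ≤ 4 / 3 * exp (2 * |τ * x|) / 4 ^ n := abs_cos_sub_sum_range_le _ n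
    _ ≤ 4 / 3 * exp (2 * τ) / 4 ^ n := by gcongr

/-- **Polynomial approximation of the cosine (Jacobi–Anger / QSVT degree bound).**
There is an absolute constant `C > 0` such that for every `τ ≥ 1` and `ε ∈ (0, 1/2)` there
exists a real polynomial `p` of degree at most `C(τ + log(1/ε))` with `|p(x)| ≤ 1` on `[-1,1]`
and `|p(x) - cos(τx)| ≤ ε` on `[-1,1]`. -/
theorem stmt17 :
    ∃ C : ℝ, 0 < C ∧ ∀ τ : ℝ, 1 ≤ τ → ∀ ε : ℝ, ε ∈ Set.Ioo (0 : ℝ) (1 / 2) →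
      ∃ p : Polynomial ℝ,
        (p.natDegree : ℝ) ≤ C * (τ + Real.log (1 / ε)) ∧
        (∀ x ∈ Set.Icc (-1 : ℝ) 1, |p.eval x| ≤ 1) ∧
        (∀ x ∈ Set.Icc (-1 : ℝ) 1, |p.eval x - Real.cos (τ * x)| ≤ ε) := by
  refine ⟨8, by norm_num, fun τ hτ ε ⟨hε0, hε⟩ ↦ ?_⟩
  have hlog : 0 ≤ log (1 / ε) := log_nonneg (by rw [le_div_iff₀ hε0]; linarith)
  set n := ⌈2 * τ + log (1 / ε)⌉₊ + 1
  have hn_le : (n : ℝ) ≤ 2 * τ + log (1 / ε) + 2 := by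
    have := Nat.ceil_lt_add_one (by positivity : 0 ≤ 2 * τ + log (1 / ε)); push_cast [n]; linarith
  have hn_ge : 2 * τ + log (1 / ε) + 1 ≤ n := by
    have := Nat.le_ceil (2 * τ + log (1 / ε)); push_cast [n]; linarith
  set q := (cosTaylor n).comp (C τ * X)
  have hq : ∀ x ∈ Set.Icc (-1 : ℝ) 1, |q.eval x - cos (τ * x)| ≤ ε / 2 := fun x hx ↦
    (abs_eval_cosTaylor_comp_sub_cos_le (by linarith) (abs_le.2 hx) n).trans
      (four_thirds_mul_exp_div_four_pow_le hε0 hn_ge)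
  refine ⟨C (1 + ε / 2)⁻¹ * q, ?_, fun x hx ↦ ?_, fun x hx ↦ ?_⟩
  · have hdeg : (C (1 + ε / 2)⁻¹ * q).natDegree ≤ 2 * n :=
      (natDegree_C_mul_le _ _).trans (natDegree_cosTaylor_comp_le τ n)
    have : ((C (1 + ε / 2)⁻¹ * q).natDegree : ℝ) ≤ 2 * n := by exact_mod_cast hdeg
    linarith
  · rw [eval_mul, eval_C, inv_mul_eq_div]
    exact abs_div_one_add_le_one (abs_cos_le_one _) (hq x hx)
  · rw [eval_mul, eval_C, inv_mul_eq_div]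
    linarith [abs_div_one_add_sub_le (abs_cos_le_one _) (hq x hx)]
end
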